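/- arXiv:math/0607671 — 2 statements merged into one kernel-verified Lean document; each statement's English description precedes it below -/
import Mathlib

section
/- Let n ≥ 1 and let ρ_n(x,t) denote the word (t x t⁻¹) x (t x t⁻¹)⁻¹ x^{-(n+1)} in the free group on two generators x, t. Then the presented group Q_n = ⟨x, t | ρ_n(x,t), x^n⟩ is isomorphic to the HNN extension of ℤ/n × ℤ/n along the isomorphism φ from the first direct factor to the second direct factor sending a generator of ℤ/n × 1 to a generator of 1 × ℤ/n. -/
/-- The word `ρ_k(x,t) = (t x t⁻¹) x (t x t⁻¹)⁻¹ x^{-(k+1)}`, evaluated at elements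
`x`, `t` of a group. -/
def rhoWord {G : Type*} [Group G] (k : ℕ) (x t : G) : G :=
  (t * x * t⁻¹) * x * (t * x * t⁻¹)⁻¹ * x ^ (-(k + 1 : ℤ))

/-- The first direct factor `ℤ/n × 1` of `ℤ/n × ℤ/n` (written multiplicatively). -/
def firstFactor (n : ℕ) : Subgroup (Multiplicative (ZMod n) × Multiplicative (ZMod n)) :=
  (MonoidHom.inl _ _).range

/-- The second direct factor `1 × ℤ/n` of `ℤ/n × ℤ/n` (written multiplicatively). -/
def secondFactor (n : ℕ) : Subgroup (Multiplicative (ZMod n) × Multiplicative (ZMod n)) :=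
  (MonoidHom.inr _ _).range

lemma map_firstFactor (n : ℕ) :
    (firstFactor n).map (MulEquiv.prodComm :
      Multiplicative (ZMod n) × Multiplicative (ZMod n) ≃* _).toMonoidHom = secondFactor n := by
  ext p
  constructor
  · rintro ⟨y, ⟨c, rfl⟩, rfl⟩
    exact ⟨c, rfl⟩
  · rintro ⟨c, rfl⟩
    exact ⟨(MonoidHom.inl _ _) c, ⟨c, rfl⟩, rfl⟩

/-- The isomorphism `φ : ℤ/n × 1 ≃ 1 × ℤ/n` carrying the first direct factor of
`ℤ/n × ℤ/n` to the second, `(a, 1) ↦ (1, a)`; in particular it sends a generator of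
`ℤ/n × 1` to a generator of `1 × ℤ/n`. -/
noncomputable def phi (n : ℕ) : (firstFactor n) ≃* (secondFactor n) :=
  ((MulEquiv.prodComm :
      Multiplicative (ZMod n) × Multiplicative (ZMod n) ≃* _).subgroupMap
    (firstFactor n)).trans (MulEquiv.subgroupCongr (map_firstFactor n))

/-!
Once `x ^ n = 1`, the factor `x^{-(n+1)}` of `ρ_n(x,t)` is `x⁻¹`, so the relation `ρ_n = 1` says
exactly that `x` commutes with `t x t⁻¹`: `Q_n = ⟨x, t | x^n, [x, t x t⁻¹]⟩`. In the HNN extension,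
`a = (1, 0)` and `t a t⁻¹ = φ(a) = (0, 1)` generate the base `ℤ/n × ℤ/n`, and the defining relations
of the extension reduce to `a^n = 1` and `[a, t a t⁻¹] = 1`. Hence `x ↦ a`, `t ↦ t` and its evident
inverse are mutually inverse homomorphisms, as one checks on generators.
-/

open Multiplicative

section ZModHom

variable {G : Type*} [Group G] {n : ℕ}

lemma Multiplicative.exists_ofAdd_intCast (a : Multiplicative (ZMod n)) :
    ∃ k : ℤ, ofAdd (k : ZMod n) = a := by
  obtain ⟨k, hk⟩ := ZMod.intCast_surjective (toAdd a)
  exact ⟨k, by rw [hk, ofAdd_toAdd]⟩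

lemma Multiplicative.ofAdd_one_pow_card : (ofAdd (1 : ZMod n)) ^ n = 1 := by
  rw [← ofAdd_nsmul, nsmul_one, ZMod.natCast_self, ofAdd_zero]

lemma MonoidHom.ext_zmod {f g : Multiplicative (ZMod n) →* G}
    (h : f (ofAdd 1) = g (ofAdd 1)) : f = g := by
  refine MonoidHom.ext fun a => ?_
  obtain ⟨k, rfl⟩ := exists_ofAdd_intCast a
  rw [← Int.smul_one_eq_cast, ofAdd_zsmul, map_zpow, map_zpow, h]

lemma MonoidHom.ext_zmod_prod {f g : Multiplicative (ZMod n) × Multiplicative (ZMod n) →* G}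
    (h₁ : f (ofAdd 1, 1) = g (ofAdd 1, 1)) (h₂ : f (1, ofAdd 1) = g (1, ofAdd 1)) : f = g := by
  have hinl : f.comp (inl _ _) = g.comp (inl _ _) := ext_zmod h₁
  have hinr : f.comp (inr _ _) = g.comp (inr _ _) := ext_zmod h₂
  ext ⟨a, b⟩
  have hab : ((a, b) : Multiplicative (ZMod n) × Multiplicative (ZMod n)) =
      inl _ _ a * inr _ _ b := by
    simp
  rw [hab, map_mul, map_mul, ← comp_apply, ← comp_apply, hinl, hinr, comp_apply, comp_apply]

noncomputable def zmodPowHom (x : G) (hx : x ^ n = 1) : Multiplicative (ZMod n) →* G :=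
  AddMonoidHom.toMultiplicativeLeft
    (ZMod.lift n ⟨zmultiplesHom (Additive G) (Additive.ofMul x), by
      rw [zmultiplesHom_apply, natCast_zsmul, ← ofMul_pow, hx, ofMul_one]⟩)

lemma zmodPowHom_ofAdd_intCast (x : G) (hx : x ^ n = 1) (k : ℤ) :
    zmodPowHom x hx (ofAdd (k : ZMod n)) = x ^ k := by
  simp [zmodPowHom]

@[simp]
lemma zmodPowHom_ofAdd_one (x : G) (hx : x ^ n = 1) : zmodPowHom x hx (ofAdd 1) = x := by
  simpa using zmodPowHom_ofAdd_intCast x hx 1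

lemma zmodPowHom_conj {x : G} (hx : x ^ n = 1) (s : G) (hsx : (s * x * s⁻¹) ^ n = 1)
    (a : Multiplicative (ZMod n)) :
    zmodPowHom (s * x * s⁻¹) hsx a = s * zmodPowHom x hx a * s⁻¹ := by
  obtain ⟨k, rfl⟩ := exists_ofAdd_intCast a
  simp only [zmodPowHom_ofAdd_intCast, conj_zpow]

lemma Commute.zmodPowHom_apply {x y : G} (hxy : Commute x y) (hx : x ^ n = 1) (hy : y ^ n = 1)
    (a b : Multiplicative (ZMod n)) : Commute (zmodPowHom x hx a) (zmodPowHom y hy b) := by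
  obtain ⟨k, rfl⟩ := exists_ofAdd_intCast a
  obtain ⟨l, rfl⟩ := exists_ofAdd_intCast b
  rw [zmodPowHom_ofAdd_intCast, zmodPowHom_ofAdd_intCast]
  exact hxy.zpow_zpow k l

noncomputable def zmodProdHom (x y : G) (hx : x ^ n = 1) (hy : y ^ n = 1) (hxy : Commute x y) :
    Multiplicative (ZMod n) × Multiplicative (ZMod n) →* G :=
  (zmodPowHom x hx).noncommCoprod (zmodPowHom y hy) (hxy.zmodPowHom_apply hx hy)

lemma zmodProdHom_apply_inl {x y : G} (hx : x ^ n = 1) (hy : y ^ n = 1) (hxy : Commute x y)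
    (a : Multiplicative (ZMod n)) : zmodProdHom x y hx hy hxy (a, 1) = zmodPowHom x hx a := by
  simp [zmodProdHom]

lemma zmodProdHom_apply_inr {x y : G} (hx : x ^ n = 1) (hy : y ^ n = 1) (hxy : Commute x y)
    (b : Multiplicative (ZMod n)) : zmodProdHom x y hx hy hxy (1, b) = zmodPowHom y hy b := by
  simp [zmodProdHom]

end ZModHom

lemma rhoWord_eq_one_iff_commute {G : Type*} [Group G] {k : ℕ} {x : G} (hx : x ^ k = 1) (t : G) :
    rhoWord k x t = 1 ↔ Commute x (t * x * t⁻¹) := by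
  have hpow : x ^ (-(k + 1 : ℤ)) = x⁻¹ := by
    rw [neg_add, zpow_add, zpow_neg, zpow_natCast, hx, inv_one, one_mul, zpow_neg_one]
  rw [rhoWord, hpow, mul_inv_eq_one, mul_inv_eq_iff_eq_mul]
  exact ⟨fun h => h.symm, fun h => h.symm⟩

lemma map_rhoWord {G H : Type*} [Group G] [Group H] (f : G →* H) (k : ℕ) (x t : G) :
    f (rhoWord k x t) = rhoWord k (f x) (f t) := by
  simp [rhoWord]

abbrev Qn (n : ℕ) : Type :=
  PresentedGroup ({rhoWord n (FreeGroup.of 0) (FreeGroup.of 1), FreeGroup.of 0 ^ n} :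
    Set (FreeGroup (Fin 2)))

namespace Qn

variable {n : ℕ}

def x : Qn n := PresentedGroup.of 0

def t : Qn n := PresentedGroup.of 1

lemma x_pow : (x : Qn n) ^ n = 1 := by
  change PresentedGroup.mk _ (FreeGroup.of 0) ^ n = 1
  rw [← map_pow]
  exact PresentedGroup.one_of_mem (by simp)

lemma rhoWord_x_t : rhoWord n (x : Qn n) t = 1 := by
  change rhoWord n (PresentedGroup.mk _ (FreeGroup.of 0))
    (PresentedGroup.mk _ (FreeGroup.of 1)) = 1
  rw [← map_rhoWord]
  exact PresentedGroup.one_of_mem (by simp)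

lemma commute_x_conj : Commute (x : Qn n) (t * x * t⁻¹) :=
  (rhoWord_eq_one_iff_commute x_pow t).1 rhoWord_x_t

variable {G : Type*} [Group G]

def lift (y s : G) (hy : y ^ n = 1) (hρ : rhoWord n y s = 1) : Qn n →* G :=
  PresentedGroup.toGroup (f := ![y, s]) <| by
    rintro r (rfl | rfl)
    · simpa [map_rhoWord] using hρ
    · simpa using hy

@[simp]
lemma lift_x (y s : G) (hy : y ^ n = 1) (hρ : rhoWord n y s = 1) : lift y s hy hρ x = y :=
  PresentedGroup.toGroup.of _

@[simp]
lemma lift_t (y s : G) (hy : y ^ n = 1) (hρ : rhoWord n y s = 1) : lift y s hy hρ t = s :=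
  PresentedGroup.toGroup.of _

lemma hom_ext {f g : Qn n →* G} (hx : f x = g x) (ht : f t = g t) : f = g :=
  PresentedGroup.ext fun i => by fin_cases i <;> assumption

end Qn

abbrev ZModSqHNN (n : ℕ) : Type :=
  HNNExtension (Multiplicative (ZMod n) × Multiplicative (ZMod n)) (firstFactor n)
    (secondFactor n) (phi n)

namespace ZModSqHNN

open HNNExtension

variable {n : ℕ}

lemma t_mul_of_inl_mul_t_inv (c : Multiplicative (ZMod n)) :
    (t * of (c, 1) * t⁻¹ : ZModSqHNN n) = of (1, c) :=
  (equiv_eq_conj (φ := phi n) ⟨(c, 1), c, rfl⟩).symm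

noncomputable def x : ZModSqHNN n := of (ofAdd 1, 1)

lemma x_pow : (x : ZModSqHNN n) ^ n = 1 := by
  rw [x, ← map_pow, Prod.pow_mk, ofAdd_one_pow_card, one_pow, Prod.mk_one_one, map_one]

lemma rhoWord_x_t : rhoWord n (x : ZModSqHNN n) t = 1 := by
  refine (rhoWord_eq_one_iff_commute x_pow t).2 ?_
  rw [x, t_mul_of_inl_mul_t_inv]
  exact (MonoidHom.commute_inl_inr _ _).map of

variable {G : Type*} [Group G]

noncomputable def lift (y s : G) (hy : y ^ n = 1) (hys : Commute y (s * y * s⁻¹)) :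
    ZModSqHNN n →* G :=
  HNNExtension.lift
    (zmodProdHom y (s * y * s⁻¹) hy (by rw [conj_pow, hy, mul_one, mul_inv_cancel]) hys) s <| by
    rintro ⟨_, c, rfl⟩
    change s * zmodProdHom _ _ _ _ _ (c, 1) = zmodProdHom _ _ _ _ _ (1, c) * s
    rw [zmodProdHom_apply_inl, zmodProdHom_apply_inr, zmodPowHom_conj hy, inv_mul_cancel_right]

@[simp]
lemma lift_of_inl_one (y s : G) (hy : y ^ n = 1) (hys : Commute y (s * y * s⁻¹)) :
    lift y s hy hys (of (ofAdd 1, 1)) = y := by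
  simp [lift, zmodProdHom_apply_inl]

@[simp]
lemma lift_of_inr_one (y s : G) (hy : y ^ n = 1) (hys : Commute y (s * y * s⁻¹)) :
    lift y s hy hys (of (1, ofAdd 1)) = s * y * s⁻¹ := by
  simp [lift, zmodProdHom_apply_inr]

@[simp]
lemma lift_t (y s : G) (hy : y ^ n = 1) (hys : Commute y (s * y * s⁻¹)) :
    lift y s hy hys t = s :=
  HNNExtension.lift_t _ _ _

end ZModSqHNN

theorem Qn_iso_hnnExtension_general (n : ℕ) :
    Nonempty
      (PresentedGroup ({rhoWord n (FreeGroup.of 0) (FreeGroup.of 1),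
          FreeGroup.of 0 ^ n} : Set (FreeGroup (Fin 2))) ≃*
        HNNExtension (Multiplicative (ZMod n) × Multiplicative (ZMod n))
          (firstFactor n) (secondFactor n) (phi n)) := by
  let toHNN : Qn n →* ZModSqHNN n :=
    Qn.lift ZModSqHNN.x HNNExtension.t ZModSqHNN.x_pow ZModSqHNN.rhoWord_x_t
  let toQn : ZModSqHNN n →* Qn n := ZModSqHNN.lift Qn.x Qn.t Qn.x_pow Qn.commute_x_conj
  have hQn : toQn.comp toHNN = .id _ :=
    Qn.hom_ext (by simp [toQn, toHNN, ZModSqHNN.x]) (by simp [toQn, toHNN])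
  have hHNN : toHNN.comp toQn = .id _ := by
    refine HNNExtension.hom_ext (MonoidHom.ext_zmod_prod ?_ ?_) (by simp [toQn, toHNN])
    · simp [toQn, toHNN, ZModSqHNN.x]
    · simp [toQn, toHNN, ZModSqHNN.x, ZModSqHNN.t_mul_of_inl_mul_t_inv]
  exact ⟨toHNN.toMulEquiv toQn hQn hHNN⟩

/-- For `n ≥ 1`, the presented group `Q_n = ⟨x, t | ρ_n(x,t), x^n⟩` is
isomorphic to the HNN extension of `ℤ/n × ℤ/n` along the isomorphism `φ` from the first
direct factor to the second direct factor, `(a, 1) ↦ (1, a)`. -/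
theorem Qn_iso_hnnExtension (n : ℕ) (hn : 1 ≤ n) :
    Nonempty
      (PresentedGroup ({rhoWord n (FreeGroup.of 0) (FreeGroup.of 1),
          FreeGroup.of 0 ^ n} : Set (FreeGroup (Fin 2))) ≃*
        HNNExtension (Multiplicative (ZMod n) × Multiplicative (ZMod n))
          (firstFactor n) (secondFactor n) (phi n)) :=
  Qn_iso_hnnExtension_general n
end

section
/- Let Γ be a group admitting a finite presentation with g generators and r relators. Then the minimal number of generators of the abelian group H₂(Γ; ℤ) (second group homology with trivial ℤ coefficients) is at most r − g + rk(H₁(Γ; ℤ)), where rk denotes the torsion-free rank of the abelianization of Γ (i.e. the dimension over ℚ of ℚ ⊗_ℤ Γ^{ab}). Equivalently, d(H₂(Γ)) − rk(H₁(Γ)) ≤ r − g. -/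
open scoped TensorProduct

/-- The second homology group `H₂(Γ;ℤ)` of a group `Γ`, computed by Hopf's formula
`H₂(Γ;ℤ) ≅ (R ⊓ [F,F]) / [F,R]` from a presentation `Γ = F/R` of `Γ` as a quotient of a
free group `F` by a normal subgroup `R` (here `R` is the kernel of the quotient map
`π : F → Γ`).  By Hopf's theorem this does not depend on the chosen presentation. -/
def hopfH2 {α : Type*} {Γ : Type*} [Group Γ] (π : FreeGroup α →* Γ) : Type _ :=
  (π.ker ⊓ commutator (FreeGroup α) : Subgroup (FreeGroup α)) ⧸
    ((⁅(⊤ : Subgroup (FreeGroup α)), π.ker⁆ : Subgroup (FreeGroup α)).subgroupOf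
      (π.ker ⊓ commutator (FreeGroup α)))

noncomputable instance {α : Type*} {Γ : Type*} [Group Γ] (π : FreeGroup α →* Γ) :
    Group (hopfH2 π) :=
  QuotientGroup.Quotient.group _

/-- The torsion-free rank `rk(H₁(Γ;ℤ))` of the abelianization of `Γ`, i.e.
`dim_ℚ (ℚ ⊗_ℤ Γ^{ab})`. -/
noncomputable def rkH1 (Γ : Type*) [Group Γ] : ℕ :=
  Module.finrank ℚ (ℚ ⊗[ℤ] (Additive (Abelianization Γ)))

/-! Write `F` for the free group, `R = ker π` and `Q = R/[F,R]`; `Q` is abelian and generated by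
the images of the `r` relators. The map `Q → F^ab ≅ ℤ^g` induced by `R ⊆ F` has kernel
`(R ⊓ [F,F])/[F,R]`, which is Hopf's `H₂(Γ)`, and image `ker (F^ab → Γ^ab)`, of rank
`g - rk H₁(Γ)`. Composing with `ℤ^r ↠ Q`, the kernel of `ℤ^r → F^ab` is free of rank
`r - g + rk H₁(Γ)` and maps onto `H₂(Γ)`. -/

open Module Subgroup

theorem LinearMap.exists_finset_span_eq_ker_card_add_finrank_range_le
    {R M N : Type*} [CommRing R] [IsDomain R] [IsPrincipalIdealRing R]
    [AddCommGroup M] [Module R M] [AddCommGroup N] [Module R N] (ψ : M →ₗ[R] N)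
    {r : ℕ} (v : Fin r → M) (hv : Submodule.span R (Set.range v) = ⊤) :
    ∃ S : Finset M, Submodule.span R (S : Set M) = LinearMap.ker ψ ∧
      S.card + finrank R (LinearMap.range ψ) ≤ r := by
  classical
  let ρ : (Fin r → R) →ₗ[R] M := Fintype.linearCombination R v
  have hρ : Function.Surjective ρ := by
    rw [← LinearMap.range_eq_top, Fintype.range_linearCombination, hv]
  let K := LinearMap.ker (ψ ∘ₗ ρ)
  let b := finBasis R K
  have hrange : LinearMap.range (ψ ∘ₗ ρ) = LinearMap.range ψ := by
    rw [LinearMap.range_comp, LinearMap.range_eq_top.mpr hρ, Submodule.map_top]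
  have hnullity : finrank R (LinearMap.range ψ) + finrank R K = r := by
    rw [← hrange, ← (ψ ∘ₗ ρ).quotKerEquivRange.finrank_eq,
      Submodule.finrank_quotient_add_finrank, finrank_fin_fun]
  refine ⟨Finset.univ.image (ρ ∘ K.subtype ∘ b), ?_, ?_⟩
  · rw [Finset.coe_image, Finset.coe_univ, Set.image_univ, Set.range_comp, Set.range_comp,
      Submodule.span_image, Submodule.span_image, b.span_eq, Submodule.map_top,
      Submodule.range_subtype]
    exact (congrArg _ (LinearMap.ker_comp ρ ψ)).trans (Submodule.map_comap_eq_of_surjective hρ _)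
  · calc _ ≤ finrank R K + finrank R (LinearMap.range ψ) := by
          gcongr
          exact Finset.card_image_le.trans_eq (by simp)
      _ = r := by omega

theorem Subgroup.toAddSubgroup_closure_eq_span {Q : Type*} [CommGroup Q] (s : Set Q) :
    (closure s).toAddSubgroup = (Submodule.span ℤ (Additive.ofMul '' s)).toAddSubgroup := by
  rw [toAddSubgroup_closure, Submodule.span_int_eq_addSubgroupClosure,
    ← Equiv.image_symm_eq_preimage]
  rfl

theorem MonoidHom.exists_finset_closure_eq_top_of_closure_eq_range {G H : Type*} [Group G]
    [Group H] {j : G →* H} (hj : Function.Injective j) (T : Finset H)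
    (hT : closure (T : Set H) = j.range) :
    ∃ S : Finset G, closure (S : Set G) = ⊤ ∧ S.card ≤ T.card := by
  classical
  have hTj : (T : Set H) ⊆ Set.range j := fun x hx => (hT ▸ subset_closure hx : x ∈ j.range)
  refine ⟨T.preimage j hj.injOn, map_injective hj ?_,
    (Finset.card_preimage _ _ _).trans_le (Finset.card_filter_le _ _)⟩
  rw [MonoidHom.map_closure, Finset.coe_preimage, Set.image_preimage_eq_of_subset hTj, hT,
    MonoidHom.range_eq_map]

theorem Abelianization.map_surjective {G H : Type*} [Group G] [Group H] {f : G →* H}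
    (hf : Function.Surjective f) : Function.Surjective (Abelianization.map f) := by
  intro z
  obtain ⟨y, rfl⟩ := QuotientGroup.mk_surjective z
  obtain ⟨x, rfl⟩ := hf y
  exact ⟨Abelianization.of x, Abelianization.map_of f x⟩

theorem finrank_abelianization_freeGroup (α : Type*) [Fintype α] :
    finrank ℤ (Additive (Abelianization (FreeGroup α))) = Fintype.card α :=
  finrank_eq_card_basis (FreeAbelianGroup.basis α)

theorem rkH1_eq_finrank (Γ : Type*) [Group Γ] :
    rkH1 Γ = finrank ℤ (Additive (Abelianization Γ)) :=
  (TensorProduct.isBaseChange ℤ _ ℚ).finrank_eq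

section

variable {G : Type*} [Group G] (R : Subgroup G) [R.Normal]

abbrev QuotTopCommutator : Type _ := R ⧸ ⁅(⊤ : Subgroup G), R⁆.subgroupOf R

namespace QuotTopCommutator

variable {R}

theorem mk_conj (g : G) (x : R) :
    (QuotientGroup.mk ⟨g * x * g⁻¹, Normal.conj_mem ‹_› _ x.2 g⟩ : QuotTopCommutator R) =
      QuotientGroup.mk x := by
  rw [QuotientGroup.eq, mem_subgroupOf]
  convert commutator_mem_commutator (mem_top g) (inv_mem x.2) using 1
  simp only [commutatorElement_def, coe_mul, coe_inv]
  group

instance : CommGroup (QuotTopCommutator R) where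
  mul_comm a b := by
    induction a using QuotientGroup.induction_on with | H x => ?_
    induction b using QuotientGroup.induction_on with | H y => ?_
    rw [← QuotientGroup.mk_mul, ← mk_conj (x : G) y, ← QuotientGroup.mk_mul]
    congr 1
    ext
    simp

theorem closure_range_mk_eq_top {ι : Type*} (rel : ι → G) (hrel : ∀ i, rel i ∈ R)
    (hR : R ≤ normalClosure (Set.range rel)) :
    closure (Set.range fun i =>
      (QuotientGroup.mk ⟨rel i, hrel i⟩ : QuotTopCommutator R)) = ⊤ := by
  set H := closure (Set.range fun i =>
    (QuotientGroup.mk ⟨rel i, hrel i⟩ : QuotTopCommutator R))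
  let K : Subgroup G := (H.comap (QuotientGroup.mk' _)).map R.subtype
  have : K.Normal := ⟨by
    rintro _ ⟨y, hy, rfl⟩ g
    refine ⟨⟨g * y * g⁻¹, Normal.conj_mem ‹_› _ y.2 g⟩, ?_, rfl⟩
    change QuotientGroup.mk _ ∈ H
    rw [mk_conj]
    exact hy⟩
  have hRK : R ≤ K := hR.trans <| normalClosure_le_normal <| by
    rintro _ ⟨i, rfl⟩
    exact ⟨⟨rel i, hrel i⟩, subset_closure ⟨i, rfl⟩, rfl⟩
  refine eq_top_iff.mpr fun q _ => ?_
  obtain ⟨x, rfl⟩ := QuotientGroup.mk_surjective q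
  obtain ⟨y, hy, hyx⟩ := hRK x.2
  rwa [Subtype.ext hyx] at hy

variable (R)

def toAbelianization : QuotTopCommutator R →* Abelianization G :=
  QuotientGroup.lift _ (Abelianization.of.comp R.subtype) fun x hx => by
    rw [MonoidHom.mem_ker, MonoidHom.comp_apply, ← MonoidHom.mem_ker, Abelianization.ker_of]
    exact commutator_mono le_top le_top (mem_subgroupOf.mp hx)

def ofInfCommutator :
    (R ⊓ commutator G : Subgroup G) ⧸
        ⁅(⊤ : Subgroup G), R⁆.subgroupOf (R ⊓ commutator G) →* QuotTopCommutator R :=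
  QuotientGroup.map _ _ (inclusion inf_le_left) fun _ hx => hx

theorem ofInfCommutator_injective : Function.Injective (ofInfCommutator R) := by
  refine (injective_iff_map_eq_one _).mpr fun a ha => ?_
  induction a using QuotientGroup.induction_on with | H x => ?_
  have hx : (QuotientGroup.mk (inclusion inf_le_left x) : QuotTopCommutator R) = 1 := ha
  exact (QuotientGroup.eq_one_iff x).mpr
    ((QuotientGroup.eq_one_iff (inclusion inf_le_left x)).mp hx)

theorem range_ofInfCommutator : (ofInfCommutator R).range = (toAbelianization R).ker := by
  refine le_antisymm ((MonoidHom.range_le_ker_iff _ _).mpr ?_) fun q hq => ?_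
  · ext a
    exact (QuotientGroup.eq_one_iff (a : G)).mpr a.2.2
  · induction q using QuotientGroup.induction_on with | H y => ?_
    have hy : (y : G) ∈ commutator G := by
      rw [← Abelianization.ker_of]
      exact hq
    exact ⟨QuotientGroup.mk ⟨y, y.2, hy⟩, rfl⟩

variable {R}

theorem range_toAbelianization {Γ : Type*} [Group Γ] {π : G →* Γ}
    (hπ : Function.Surjective π) :
    (toAbelianization π.ker).range = (Abelianization.map π).ker := by
  refine le_antisymm ((MonoidHom.range_le_ker_iff _ _).mpr ?_) fun z hz => ?_
  · ext a
    show Abelianization.map π (Abelianization.of a) = 1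
    rw [Abelianization.map_of, a.2, map_one]
  · obtain ⟨w, rfl⟩ := QuotientGroup.mk_surjective z
    obtain ⟨c, hc, hcw⟩ : π w ∈ (commutator G).map π := by
      rw [map_commutator_eq, MonoidHom.range_eq_top.mpr hπ, ← _root_.commutator_def,
        ← Abelianization.ker_of]
      exact hz
    have hwc : w * c⁻¹ ∈ π.ker := by simp [hcw]
    have hc1 : Abelianization.of c = 1 := by
      rw [← MonoidHom.mem_ker, Abelianization.ker_of]
      exact hc
    refine ⟨QuotientGroup.mk ⟨w * c⁻¹, hwc⟩, ?_⟩
    show Abelianization.of (w * c⁻¹) = Abelianization.of w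
    rw [map_mul, map_inv, hc1, inv_one, mul_one]

theorem finrank_range_toAbelianization_add_rkH1 {α Γ : Type*} [Fintype α] [Group Γ]
    {π : FreeGroup α →* Γ} (hπ : Function.Surjective π) :
    finrank ℤ (LinearMap.range (toAbelianization π.ker).toAdditive.toIntLinearMap) + rkH1 Γ =
      Fintype.card α := by
  let q := (Abelianization.map π).toAdditive.toIntLinearMap
  have hq : Function.Surjective q := Abelianization.map_surjective hπ
  have hrange : LinearMap.range (toAbelianization π.ker).toAdditive.toIntLinearMap =
      LinearMap.ker q := by
    ext x
    exact SetLike.ext_iff.mp (range_toAbelianization hπ) (Additive.toMul x)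
  have : Module.Finite ℤ (Additive (Abelianization (FreeGroup α))) :=
    .of_basis (FreeAbelianGroup.basis α)
  rw [hrange, rkH1_eq_finrank, ← (q.quotKerEquivOfSurjective hq).finrank_eq, add_comm,
    Submodule.finrank_quotient_add_finrank, finrank_abelianization_freeGroup]

end QuotTopCommutator

end

open QuotTopCommutator

/-- Let `Γ` be a group admitting a finite presentation with `g` generators
and `r` relators, i.e. a surjection `π : F(g) → Γ` from the free group of rank `g` whose
kernel is the normal closure of `r` elements.  Then the minimal number of generators of
the abelian group `H₂(Γ;ℤ)` (computed here via Hopf's formula from the presentation) is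
at most `r - g + rk(H₁(Γ;ℤ))`; equivalently `d(H₂(Γ)) - rk(H₁(Γ)) ≤ r - g`.  (We state
this as the existence of a generating set of cardinality at most `r - g + rk(H₁(Γ))`.) -/
theorem dH2_le_defect_add_rkH1 (Γ : Type*) [Group Γ] (g r : ℕ)
    (π : FreeGroup (Fin g) →* Γ) (hπ : Function.Surjective π)
    (rel : Fin r → FreeGroup (Fin g))
    (hker : π.ker = Subgroup.normalClosure (Set.range rel)) :
    ∃ S : Finset (hopfH2 π),
      Subgroup.closure (S : Set (hopfH2 π)) = ⊤ ∧
      (S.card : ℤ) ≤ (r : ℤ) - (g : ℤ) + (rkH1 Γ : ℤ) := by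
  have hrel : ∀ i, rel i ∈ π.ker := fun i => hker ▸ subset_normalClosure ⟨i, rfl⟩
  let relQ i : QuotTopCommutator π.ker := QuotientGroup.mk ⟨rel i, hrel i⟩
  have hgen : Submodule.span ℤ (Set.range (Additive.ofMul ∘ relQ)) = ⊤ := by
    apply Submodule.toAddSubgroup_injective
    rw [Set.range_comp, ← toAddSubgroup_closure_eq_span,
      closure_range_mk_eq_top rel hrel hker.le]
    rfl
  obtain ⟨T, hT, hTcard⟩ := LinearMap.exists_finset_span_eq_ker_card_add_finrank_range_le
    (toAbelianization π.ker).toAdditive.toIntLinearMap _ hgen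
  have hTker : Subgroup.closure (T.map Additive.toMul.toEmbedding : Set _) =
      (toAbelianization π.ker).ker := by
    apply Subgroup.toAddSubgroup.injective
    simp only [toAddSubgroup_closure_eq_span, Finset.coe_map, Equiv.coe_toEmbedding,
      Set.image_image, ofMul_toMul, Set.image_id', hT]
    rfl
  -- `hopfH2 π` is by definition the domain of `ofInfCommutator π.ker`.
  obtain ⟨S, hS, hScard⟩ : ∃ S : Finset (hopfH2 π),
      Subgroup.closure (S : Set (hopfH2 π)) = ⊤ ∧
        S.card ≤ (T.map Additive.toMul.toEmbedding).card :=
    (ofInfCommutator π.ker).exists_finset_closure_eq_top_of_closure_eq_range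
      (ofInfCommutator_injective π.ker) _ (hTker.trans (range_ofInfCommutator π.ker).symm)
  have hrank := (finrank_range_toAbelianization_add_rkH1 hπ).trans (Fintype.card_fin g)
  rw [Finset.card_map] at hScard
  exact ⟨S, hS, by omega⟩
end
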